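/- If real-rooted polynomials f_1,…,f_k of degree n with positive leading coefficients have a common interlacing, then for every index 1 ≤ j ≤ n there exist i and i' such that λ_j(f_i) ≥ λ_j(f_1 + … + f_k) ≥ λ_j(f_{i'}), and in particular f_1 + … + f_k is real-rooted. -/

import Mathlib

open Polynomial BigOperators Finset

/-! At the largest `j`-th root `β i j` of the `f i`, every `f i` has exactly `j` roots weakly above
and the others weakly below, so `(-1) ^ j * F ≥ 0` there for `F = ∑ i, f i`; likewise
`(-1) ^ (j + 1) * F ≥ 0` at the smallest `j`-th root. Hence `F` has a root between the smallest and
the largest `j`-th root. If the interlacing is strict, these `n + 1` intervals are disjoint, and the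
`n + 1` distinct roots found determine `F`. In general, shifting `β i j` down by `2εj` and `γ j` by
`ε(2j+1)` makes the interlacing strict; the root vectors of the perturbed sums, shifted back, stay
in a compact box, and a limit point of them is a root vector of `F`. -/

open Filter Topology

section Interlacing

variable {α : Type*} [Preorder α] {n : ℕ}

def Interlaces (γ : Fin n → α) (β : Fin (n + 1) → α) : Prop :=
  ∀ j : Fin n, γ j ≤ β j.castSucc ∧ β j.succ ≤ γ j

def StrictlyInterlaces (γ : Fin n → α) (β : Fin (n + 1) → α) : Prop :=
  ∀ j : Fin n, γ j < β j.castSucc ∧ β j.succ < γ j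

theorem StrictlyInterlaces.interlaces {γ : Fin n → α} {β : Fin (n + 1) → α}
    (h : StrictlyInterlaces γ β) : Interlaces γ β :=
  fun j => ⟨(h j).1.le, (h j).2.le⟩

namespace Interlaces

variable {γ : Fin n → α} {β β' : Fin (n + 1) → α}

theorem antitone (h : Interlaces γ β) : Antitone β :=
  Fin.antitone_iff_succ_le.2 fun j => (h j).2.trans (h j).1

theorem apply_le_apply_of_lt (h : Interlaces γ β) (h' : Interlaces γ β') {m j : Fin (n + 1)}
    (hmj : m < j) : β' j ≤ β m := by
  obtain ⟨j, rfl⟩ := Fin.exists_succ_eq.2 (Fin.ne_zero_of_lt hmj)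
  calc β' j.succ ≤ γ j := (h' j).2
    _ ≤ β j.castSucc := (h j).1
    _ ≤ β m := h.antitone (Fin.le_castSucc_iff.2 hmj)

theorem strictlyInterlaces_sub {γ : Fin n → ℝ} {β : Fin (n + 1) → ℝ} (h : Interlaces γ β)
    {ε : ℝ} (hε : 0 < ε) :
    StrictlyInterlaces (fun j => γ j - ε * (2 * j + 1)) (fun j => β j - ε * (2 * j)) := by
  intro j
  simp only [Fin.val_castSucc, Fin.val_succ, Nat.cast_add, Nat.cast_one]
  constructor <;> linarith [h j]

end Interlaces

end Interlacing

theorem zero_le_neg_one_pow_card_mul_prod_sub {R ι : Type*} [CommRing R] [PartialOrder R]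
    [IsStrictOrderedRing R] [Fintype ι] [DecidableEq ι] (A : Finset ι) {t : R} {y : ι → R}
    (hA : ∀ j ∈ A, t ≤ y j) (hAc : ∀ j ∉ A, y j ≤ t) :
    0 ≤ (-1) ^ #A * ∏ j, (t - y j) :=
  calc 0 ≤ (∏ j ∈ A, (y j - t)) * ∏ j ∈ Aᶜ, (t - y j) :=
        mul_nonneg (prod_nonneg fun j hj => sub_nonneg.2 (hA j hj))
          (prod_nonneg fun j hj => sub_nonneg.2 (hAc j (mem_compl.1 hj)))
    _ = (-1) ^ #A * ∏ j, (t - y j) := by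
        rw [← prod_mul_prod_compl A, ← mul_assoc, ← prod_const, ← prod_mul_distrib]
        exact congrArg (· * _) (prod_congr rfl fun _ _ => by ring)

namespace Polynomial

theorem exists_mem_Icc_eval_eq_zero {p : ℝ[X]} {a b : ℝ} (hab : a ≤ b)
    (h : p.eval a * p.eval b ≤ 0) : ∃ x ∈ Set.Icc a b, p.eval x = 0 := by
  have h0 : (0 : ℝ) ∈ Set.uIcc (p.eval a) (p.eval b) := by
    rcases mul_nonpos_iff.1 h with ⟨ha, hb⟩ | ⟨ha, hb⟩
    exacts [Set.mem_uIcc.2 (Or.inr ⟨hb, ha⟩), Set.mem_uIcc.2 (Or.inl ⟨ha, hb⟩)]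
  obtain ⟨x, hx, hx0⟩ := intermediate_value_uIcc p.continuous.continuousOn h0
  exact ⟨x, Set.uIcc_of_le hab ▸ hx, hx0⟩

theorem eq_of_natDegree_le_of_coeff_eq_of_eval_eq {R : Type*} [CommRing R] [IsDomain R] {d : ℕ}
    {p q : R[X]} (hp : p.natDegree ≤ d) (hq : q.natDegree ≤ d) (hd : p.coeff d = q.coeff d)
    {x : Fin d → R} (hx : Function.Injective x) (h : ∀ j, p.eval (x j) = q.eval (x j)) :
    p = q := by
  refine eq_of_degree_sub_lt_of_eval_index_eq univ hx.injOn ?_ fun j _ => h j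
  rw [card_univ, Fintype.card_fin, degree_lt_iff_coeff_zero]
  intro m hm
  rcases hm.eq_or_lt with rfl | hm
  · rw [coeff_sub, hd, sub_self]
  · rw [coeff_sub, coeff_eq_zero_of_natDegree_lt (hp.trans_lt hm),
      coeff_eq_zero_of_natDegree_lt (hq.trans_lt hm), sub_self]

variable {R ι : Type*} [CommRing R] [Nontrivial R] [Fintype ι]

theorem natDegree_C_mul_prod_X_sub_C_le (a : R) (y : ι → R) :
    (C a * ∏ j, (X - C (y j))).natDegree ≤ Fintype.card ι :=
  natDegree_C_mul_le _ _ |>.trans_eq (natDegree_finsetProd_X_sub_C_eq_card _ _)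

theorem coeff_C_mul_prod_X_sub_C_card (a : R) (y : ι → R) :
    (C a * ∏ j, (X - C (y j))).coeff (Fintype.card ι) = a := by
  have hmonic : (∏ j, (X - C (y j))).Monic := monic_prod_of_monic _ _ fun j _ => monic_X_sub_C _
  rw [coeff_C_mul, ← card_univ, ← natDegree_finsetProd_X_sub_C_eq_card univ y,
    hmonic.coeff_natDegree, mul_one]

theorem eq_C_mul_prod_X_sub_C_of_tendsto {α : Type*} {l : Filter α} [l.NeBot] {d : ℕ}
    {p : α → ℝ[X]} {P : ℝ[X]} {a : ℝ} {x : α → Fin d → ℝ} {y : Fin d → ℝ}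
    (hP : ∀ t, Tendsto (fun m => (p m).eval t) l (𝓝 (P.eval t))) (hx : Tendsto x l (𝓝 y))
    (hp : ∀ m, p m = C a * ∏ j, (X - C (x m j))) : P = C a * ∏ j, (X - C (y j)) := by
  refine funext fun t => tendsto_nhds_unique (hP t) ?_
  simp only [hp, eval_mul, eval_C, eval_prod, eval_sub, eval_X]
  exact tendsto_const_nhds.mul <| tendsto_finsetProd _ fun j _ =>
    tendsto_const_nhds.sub (tendsto_pi_nhds.1 hx j)

end Polynomial

section SumOfInterlaced

variable {ι : Type*} [Fintype ι] {n : ℕ} {c : ι → ℝ} {β : ι → Fin (n + 1) → ℝ} {γ : Fin n → ℝ}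

theorem zero_le_neg_one_pow_card_mul_eval_sum {κ : Type*} [Fintype κ] [DecidableEq κ]
    (hc : ∀ i, 0 ≤ c i) {β : ι → κ → ℝ} (A : Finset κ) {t : ℝ}
    (hA : ∀ i, ∀ j ∈ A, t ≤ β i j) (hAc : ∀ i, ∀ j ∉ A, β i j ≤ t) :
    0 ≤ (-1) ^ #A * (∑ i, C (c i) * ∏ j, (X - C (β i j))).eval t := by
  simp only [eval_finsetSum, eval_mul, eval_C, eval_prod, eval_sub, eval_X, mul_sum]
  refine sum_nonneg fun i _ => ?_
  rw [mul_left_comm]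
  exact mul_nonneg (hc i) (zero_le_neg_one_pow_card_mul_prod_sub A (hA i) (hAc i))

variable [Nonempty ι]

theorem exists_eval_sum_eq_zero_of_interlaces (hc : ∀ i, 0 ≤ c i)
    (hint : ∀ i, Interlaces γ (β i)) (j : Fin (n + 1)) :
    ∃ x, (∃ i i', x ≤ β i j ∧ β i' j ≤ x) ∧
      (∑ i, C (c i) * ∏ j, (X - C (β i j))).eval x = 0 := by
  set F := ∑ i, C (c i) * ∏ j, (X - C (β i j))
  obtain ⟨imax, -, himax⟩ := exists_max_image univ (β · j) univ_nonempty
  obtain ⟨imin, -, himin⟩ := exists_min_image univ (β · j) univ_nonempty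
  have hmax : 0 ≤ (-1) ^ (j : ℕ) * F.eval (β imax j) := by
    simpa using zero_le_neg_one_pow_card_mul_eval_sum hc (Iio j)
      (fun i m hm => (hint i).apply_le_apply_of_lt (hint imax) (mem_Iio.1 hm))
      (fun i m hm => ((hint i).antitone (not_lt.1 (mt mem_Iio.2 hm))).trans (himax i (mem_univ _)))
  have hmin : 0 ≤ (-1) ^ (j : ℕ) * -1 * F.eval (β imin j) := by
    simpa [pow_succ] using zero_le_neg_one_pow_card_mul_eval_sum hc (Iic j)
      (fun i m hm => (himin i (mem_univ _)).trans ((hint i).antitone (mem_Iic.1 hm)))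
      (fun i m hm => (hint imin).apply_le_apply_of_lt (hint i) (not_le.1 (mt mem_Iic.2 hm)))
  have hsq : ((-1 : ℝ) ^ (j : ℕ)) ^ 2 = 1 := by
    rw [← pow_mul, mul_comm, pow_mul, neg_one_sq, one_pow]
  obtain ⟨x, hx, hroot⟩ := exists_mem_Icc_eval_eq_zero (himin imax (mem_univ _))
    (by nlinarith [mul_nonneg hmin hmax])
  exact ⟨x, ⟨imax, imin, hx.2, hx.1⟩, hroot⟩

theorem exists_strictAnti_roots_of_strictlyInterlaces (hc : ∀ i, 0 ≤ c i)
    (hint : ∀ i, StrictlyInterlaces γ (β i)) :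
    ∃ x : Fin (n + 1) → ℝ, StrictAnti x ∧
      ∑ i, C (c i) * ∏ j, (X - C (β i j)) = C (∑ i, c i) * ∏ j, (X - C (x j)) ∧
      ∀ j, ∃ i i', x j ≤ β i j ∧ β i' j ≤ x j := by
  choose x hx hroot using
    exists_eval_sum_eq_zero_of_interlaces hc fun i => (hint i).interlaces
  have hanti : StrictAnti x := Fin.strictAnti_iff_succ_lt.2 fun j => by
    obtain ⟨i, -, hi, -⟩ := hx j.succ
    obtain ⟨-, i', -, hi'⟩ := hx j.castSucc
    calc x j.succ ≤ β i j.succ := hi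
      _ < γ j := (hint i j).2
      _ < β i' j.castSucc := (hint i' j).1
      _ ≤ x j.castSucc := hi'
  refine ⟨x, hanti, ?_, hx⟩
  have hdeg (a : ℝ) (y : Fin (n + 1) → ℝ) : (C a * ∏ j, (X - C (y j))).natDegree ≤ n + 1 := by
    simpa using natDegree_C_mul_prod_X_sub_C_le a y
  have hcoeff (a : ℝ) (y : Fin (n + 1) → ℝ) : (C a * ∏ j, (X - C (y j))).coeff (n + 1) = a := by
    simpa using coeff_C_mul_prod_X_sub_C_card a y
  refine eq_of_natDegree_le_of_coeff_eq_of_eval_eq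
    (natDegree_sum_le_of_forall_le _ _ fun i _ => hdeg _ _) (hdeg _ _) ?_ hanti.injective
    fun j => ?_
  · simp only [finsetSum_coeff, hcoeff]
  · rw [hroot, eval_mul, eval_prod, prod_eq_zero (mem_univ j) (by simp), mul_zero]

theorem exists_antitone_roots_of_interlaces (hc : ∀ i, 0 ≤ c i)
    (hint : ∀ i, Interlaces γ (β i)) :
    ∃ x : Fin (n + 1) → ℝ, Antitone x ∧
      ∑ i, C (c i) * ∏ j, (X - C (β i j)) = C (∑ i, c i) * ∏ j, (X - C (x j)) ∧
      ∀ j, ∃ i i', x j ≤ β i j ∧ β i' j ≤ x j := by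
  obtain ⟨ε, hε_pos, hε⟩ : ∃ ε : ℕ → ℝ, (∀ m, 0 < ε m) ∧ Tendsto ε atTop (𝓝 0) :=
    ⟨fun m => 1 / (m + 1), fun m => by positivity, tendsto_one_div_add_atTop_nhds_zero_nat⟩
  let δ : ℕ → Fin (n + 1) → ℝ := fun m j => ε m * (2 * j)
  have hδ : ∀ j, Tendsto (δ · j) atTop (𝓝 0) := fun j => by
    simpa using hε.mul_const (2 * (j : ℝ))
  choose x hx_anti hx_eq hx_mem using fun m =>
    exists_strictAnti_roots_of_strictlyInterlaces hc fun i =>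
      (hint i).strictlyInterlaces_sub (hε_pos m)
  have hK : IsCompact (Set.univ.pi fun j => ⋃ i, ⋃ i', Set.Icc (β i' j) (β i j)) :=
    isCompact_univ_pi fun j => isCompact_iUnion fun i => isCompact_iUnion fun i' => isCompact_Icc
  obtain ⟨y, hy, φ, hφ, hlim⟩ := hK.tendsto_subseq (x := fun m j => x m j + δ m j) fun m j _ => by
    obtain ⟨i, i', h, h'⟩ := hx_mem m j
    exact Set.mem_iUnion₂.2 ⟨i, i', by constructor <;> linarith⟩
  have hδφ : ∀ j, Tendsto (fun m => δ (φ m) j) atTop (𝓝 0) := fun j =>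
    (hδ j).comp hφ.tendsto_atTop
  have hxy : Tendsto (fun m => x (φ m)) atTop (𝓝 y) := tendsto_pi_nhds.2 fun j => by
    simpa using (tendsto_pi_nhds.1 hlim j).sub (hδφ j)
  refine ⟨y, fun u v huv => ?_, ?_, fun j => ?_⟩
  · exact le_of_tendsto_of_tendsto' (tendsto_pi_nhds.1 hxy v) (tendsto_pi_nhds.1 hxy u)
      fun m => (hx_anti (φ m)).antitone huv
  · refine eq_C_mul_prod_X_sub_C_of_tendsto
      (p := fun m => ∑ i, C (c i) * ∏ j, (X - C (β i j - δ (φ m) j))) (fun t => ?_) hxy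
      fun m => hx_eq (φ m)
    simp only [eval_finsetSum, eval_mul, eval_C, eval_prod, eval_sub, eval_X]
    refine tendsto_finsetSum _ fun i _ => tendsto_const_nhds.mul <|
      tendsto_finsetProd _ fun j _ => tendsto_const_nhds.sub ?_
    simpa using tendsto_const_nhds.sub (hδφ j)
  · obtain ⟨i, i', h⟩ := Set.mem_iUnion₂.1 (hy j (Set.mem_univ j))
    exact ⟨i, i', h.2, h.1⟩

end SumOfInterlaced

theorem common_interlacing_sum_roots_general
    (n k : ℕ) (hk : 0 < k)
    (f : Fin k → Polynomial ℝ)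
    (c : Fin k → ℝ) (β : Fin k → Fin (n + 1) → ℝ) (γ : Fin n → ℝ)
    (hc : ∀ i, 0 < c i)
    (hf : ∀ i, f i = C (c i) * ∏ j, (X - C (β i j)))
    (hint : ∀ i, ∀ j : Fin n, γ j ≤ β i j.castSucc ∧ β i j.succ ≤ γ j) :
    ∃ βS : Fin (n + 1) → ℝ, Antitone βS ∧
      (∑ i, f i) = C (∑ i, c i) * ∏ j, (X - C (βS j)) ∧
      ∀ j : Fin (n + 1), ∃ i i' : Fin k, βS j ≤ β i j ∧ β i' j ≤ βS j := by
  have : Nonempty (Fin k) := ⟨⟨0, hk⟩⟩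
  obtain ⟨βS, hanti, heq, hbounds⟩ := exists_antitone_roots_of_interlaces (fun i => (hc i).le) hint
  exact ⟨βS, hanti, (sum_congr rfl fun i _ => hf i).trans heq, hbounds⟩

/-- If real-rooted polynomials `f_1,…,f_k` of degree `n+1` with positive leading
coefficients (with decreasingly ordered roots `β i`) have a common interlacing
(a polynomial with roots `γ`), then their sum is real-rooted and for every index `j`
there are `i`, `i'` with `λ_j(f_i) ≥ λ_j(∑ f) ≥ λ_j(f_{i'})`. -/
theorem common_interlacing_sum_roots
    (n k : ℕ) (hk : 0 < k)
    (f : Fin k → Polynomial ℝ)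
    (c : Fin k → ℝ) (β : Fin k → Fin (n + 1) → ℝ) (γ : Fin n → ℝ)
    (hc : ∀ i, 0 < c i) (hβ : ∀ i, Antitone (β i)) (hγ : Antitone γ)
    (hf : ∀ i, f i = C (c i) * ∏ j, (X - C (β i j)))
    (hint : ∀ i, ∀ j : Fin n, γ j ≤ β i j.castSucc ∧ β i j.succ ≤ γ j) :
    ∃ βS : Fin (n + 1) → ℝ, Antitone βS ∧
      (∑ i, f i) = C (∑ i, c i) * ∏ j, (X - C (βS j)) ∧
      ∀ j : Fin (n + 1), ∃ i i' : Fin k, βS j ≤ β i j ∧ β i' j ≤ βS j :=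
  common_interlacing_sum_roots_general n k hk f c β γ hc hf hint
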